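/- arXiv:1210.0259 — 2 statements merged into one kernel-verified Lean document; each statement's English description precedes it below -/
import Mathlib

section
/- Let $\sigma_1, \ldots, \sigma_n > 0$ and let $\mathcal{A}$ be the $(n-1)\times(n-1)$ tridiagonal matrix with diagonal entries $\mathcal{A}_{kk} = \sigma_k^2 + \sigma_{k+1}^2$ and off-diagonal entries $\mathcal{A}_{k,k+1} = \mathcal{A}_{k+1,k} = -\sigma_{k+1}^2$. Then for $1 \leq j \leq k \leq n-1$, the determinant of the submatrix $\mathcal{A}^{j,k}$ obtained by deleting the $j$-th row and $k$-th column of $\mathcal{A}$ satisfies $(-1)^{j+k} \det(\mathcal{A}^{j,k}) = \sigma_1^2 \sigma_2^2 \cdots \sigma_n^2 \left(\sum_{\ell=1}^{j} \sigma_\ell^{-2}\right)\left(\sum_{\ell=k+1}^{n} \sigma_\ell^{-2}\right)$. -/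
/-!
Write `s j = ∑_{ℓ ≤ j} σ_ℓ⁻²` and `n = m + 2`. The matrix `A` is the weighted discrete Laplacian
`(A v)_p = σ_p² (v_p - v_{p-1}) - σ_{p+1}² (v_{p+1} - v_p)` with boundary values `v_0 = v_n = 0`, and
its Green's function is `G(p, q) = s(min p q) (s n - s(max p q))`: the flux `σ_p² (G(p, q) - G(p-1, q))`
is `s n - s q` for `p ≤ q` and `-s q` for `p > q`, so it jumps by `s n` exactly at `p = q`. Hence
`A G = s(n) I` and `s(n) adj A = det A · G`. Reading this at the bottom-right corner, whose cofactor is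
the determinant of the same matrix one size smaller, gives `det A = (∏ σ_ℓ²) s(n)` by induction, and
then `adj A = (∏ σ_ℓ²) G`, whose `(k, j)` entry is the claimed cofactor.
-/

open Finset

lemma Matrix.smul_adjugate_of_mul_eq_smul_one {n R : Type*} [Fintype n] [DecidableEq n]
    [CommRing R] {A B : Matrix n n R} {c : R} (h : A * B = c • 1) :
    c • A.adjugate = A.det • B :=
  calc c • A.adjugate = A.adjugate * (A * B) := by rw [h, Matrix.mul_smul, Matrix.mul_one]
    _ = A.det • B := by rw [← Matrix.mul_assoc, Matrix.adjugate_mul, Matrix.smul_mul,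
      Matrix.one_mul]

noncomputable def invSqSum (σ : ℕ → ℝ) (j : ℕ) : ℝ := ∑ ℓ ∈ Icc 1 j, (σ ℓ ^ 2)⁻¹

lemma invSqSum_zero (σ : ℕ → ℝ) : invSqSum σ 0 = 0 := by simp [invSqSum]

lemma invSqSum_succ (σ : ℕ → ℝ) (j : ℕ) :
    invSqSum σ (j + 1) = invSqSum σ j + (σ (j + 1) ^ 2)⁻¹ :=
  sum_Icc_succ_top (by omega) _

lemma invSqSum_sub (σ : ℕ → ℝ) {j n : ℕ} (h : j ≤ n) :
    invSqSum σ n - invSqSum σ j = ∑ ℓ ∈ Icc (j + 1) n, (σ ℓ ^ 2)⁻¹ := by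
  have hIoc (a b : ℕ) : Icc (a + 1) b = Ioc a b := Icc_add_one_left_eq_Ioc a b
  simp only [invSqSum, sub_eq_iff_eq_add', hIoc]
  rw [sum_Ioc_consecutive _ (Nat.zero_le j) h]

lemma invSqSum_pos {σ : ℕ → ℝ} {j : ℕ} (hσ : ∀ k, 1 ≤ k → k ≤ j → 0 < σ k) (hj : 1 ≤ j) :
    0 < invSqSum σ j :=
  sum_pos (fun ℓ hℓ => by have := hσ ℓ (mem_Icc.1 hℓ).1 (mem_Icc.1 hℓ).2; positivity)
    ⟨1, mem_Icc.2 ⟨le_rfl, hj⟩⟩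

noncomputable def greenFun (σ : ℕ → ℝ) (n p q : ℕ) : ℝ :=
  invSqSum σ (min p q) * (invSqSum σ n - invSqSum σ (max p q))

lemma sq_mul_greenFun_succ_sub (σ : ℕ → ℝ) (n q : ℕ) {p : ℕ} (hp : σ (p + 1) ≠ 0) :
    σ (p + 1) ^ 2 * (greenFun σ n (p + 1) q - greenFun σ n p q) =
      if p < q then invSqSum σ n - invSqSum σ q else -invSqSum σ q := by
  unfold greenFun
  split_ifs with h
  · rw [min_eq_left h, min_eq_left h.le, max_eq_right h, max_eq_right h.le, invSqSum_succ]
    field_simp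
    ring
  · push Not at h
    rw [min_eq_right (by omega), min_eq_right h, max_eq_left (by omega), max_eq_left h,
      invSqSum_succ]
    field_simp
    ring

lemma greenFun_laplacian (σ : ℕ → ℝ) (n q : ℕ) {p : ℕ} (hp₁ : σ (p + 1) ≠ 0)
    (hp₂ : σ (p + 2) ≠ 0) :
    σ (p + 1) ^ 2 * (greenFun σ n (p + 1) q - greenFun σ n p q) -
        σ (p + 2) ^ 2 * (greenFun σ n (p + 2) q - greenFun σ n (p + 1) q) =
      if p + 1 = q then invSqSum σ n else 0 := by
  rw [sq_mul_greenFun_succ_sub σ n q hp₁, sq_mul_greenFun_succ_sub (p := p + 1) σ n q hp₂]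
  split_ifs <;> first | omega | ring

def spacingCov (m : ℕ) (σ : ℕ → ℝ) : Matrix (Fin (m + 1)) (Fin (m + 1)) ℝ :=
  Matrix.of fun i j =>
    if i = j then σ ((i : ℕ) + 1) ^ 2 + σ ((i : ℕ) + 2) ^ 2
    else if (j : ℕ) = (i : ℕ) + 1 then -(σ ((i : ℕ) + 2)) ^ 2
    else if (i : ℕ) = (j : ℕ) + 1 then -(σ ((i : ℕ) + 1)) ^ 2
    else 0

lemma sum_spacingCov_mul (m : ℕ) (σ : ℕ → ℝ) (v : ℕ → ℝ) (h₀ : v 0 = 0) (hₙ : v (m + 2) = 0)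
    (i : Fin (m + 1)) :
    ∑ k, spacingCov m σ i k * v (k + 1) =
      σ (i + 1) ^ 2 * (v (i + 1) - v i) - σ (i + 2) ^ 2 * (v (i + 2) - v (i + 1)) := by
  obtain ⟨i, hi⟩ := i
  have hterm : ∀ k : Fin (m + 1), spacingCov m σ ⟨i, hi⟩ k * v (k + 1) =
      (if (k : ℕ) = i then (σ (i + 1) ^ 2 + σ (i + 2) ^ 2) * v (i + 1) else 0) +
      (if (k : ℕ) = i + 1 then -σ (i + 2) ^ 2 * v (i + 2) else 0) +
      (if (k : ℕ) + 1 = i then -σ (i + 1) ^ 2 * v i else 0) := by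
    rintro ⟨k, hk⟩
    simp only [spacingCov, Matrix.of_apply, Fin.mk.injEq]
    split_ifs <;> first | omega | (subst_vars; ring)
  simp only [hterm, sum_add_distrib]
  have hnext : (if i + 1 ∈ range (m + 1) then -σ (i + 2) ^ 2 * v (i + 2) else 0) =
      -σ (i + 2) ^ 2 * v (i + 2) := by
    split_ifs with h
    · rfl
    · rw [show i + 2 = m + 2 by rw [mem_range] at h; omega, hₙ, mul_zero]
  have hprev : ∑ k ∈ range (m + 1), (if k + 1 = i then -σ (i + 1) ^ 2 * v i else 0) =
      -σ (i + 1) ^ 2 * v i := by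
    rcases i with _ | i
    · simp [h₀]
    · simp only [Nat.add_right_cancel_iff, sum_ite_eq', mem_range, if_pos (by omega : i < m + 1)]
  rw [Fin.sum_univ_eq_sum_range (fun k => if k = i then _ else 0),
    Fin.sum_univ_eq_sum_range (fun k => if k = i + 1 then _ else 0),
    Fin.sum_univ_eq_sum_range (fun k => if k + 1 = i then _ else 0),
    sum_ite_eq', sum_ite_eq', if_pos (mem_range.2 hi), hnext, hprev]
  ring

noncomputable def greenMatrix (m : ℕ) (σ : ℕ → ℝ) : Matrix (Fin (m + 1)) (Fin (m + 1)) ℝ :=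
  Matrix.of fun i j => greenFun σ (m + 2) (i + 1) (j + 1)

lemma spacingCov_mul_greenMatrix (m : ℕ) {σ : ℕ → ℝ}
    (hσ : ∀ k, 1 ≤ k → k ≤ m + 2 → σ k ≠ 0) :
    spacingCov m σ * greenMatrix m σ = invSqSum σ (m + 2) • 1 := by
  ext i j
  have hv₀ : greenFun σ (m + 2) 0 (j + 1) = 0 := by simp [greenFun, invSqSum_zero]
  have hvₙ : greenFun σ (m + 2) (m + 2) (j + 1) = 0 := by simp [greenFun]
  rw [Matrix.mul_apply]
  refine (sum_spacingCov_mul m σ (greenFun σ (m + 2) · (j + 1)) hv₀ hvₙ i).trans ?_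
  rw [greenFun_laplacian σ _ _ (hσ _ (by omega) (by omega)) (hσ _ (by omega) (by omega))]
  simp [Matrix.one_apply, Fin.ext_iff]

lemma spacingCov_submatrix_castSucc (m : ℕ) (σ : ℕ → ℝ) :
    (spacingCov (m + 1) σ).submatrix Fin.castSucc Fin.castSucc = spacingCov m σ := by
  ext i j
  simp [spacingCov, Fin.castSucc_inj]

lemma det_spacingCov (m : ℕ) {σ : ℕ → ℝ} (hσ : ∀ k, 1 ≤ k → k ≤ m + 2 → 0 < σ k) :
    (spacingCov m σ).det = (∏ ℓ ∈ Icc 1 (m + 2), σ ℓ ^ 2) * invSqSum σ (m + 2) := by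
  induction m with
  | zero =>
    have h₁ := (hσ 1 le_rfl (by omega)).ne'
    have h₂ := (hσ 2 (by omega) le_rfl).ne'
    simp [spacingCov, Matrix.det_unique, invSqSum_succ, invSqSum_zero, prod_Icc_succ_top]
    field_simp
    ring
  | succ m ih =>
    have hσ₀ : ∀ k, 1 ≤ k → k ≤ m + 3 → σ k ≠ 0 := fun k h₁ h₂ => (hσ k h₁ h₂).ne'
    have hs : invSqSum σ (m + 2) ≠ 0 :=
      (invSqSum_pos (fun k h₁ h₂ => hσ k h₁ (by omega)) (by omega)).ne'
    have hn := hσ₀ (m + 3) (by omega) le_rfl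
    have hminor : (spacingCov (m + 1) σ).adjugate (Fin.last _) (Fin.last _) =
        (∏ ℓ ∈ Icc 1 (m + 2), σ ℓ ^ 2) * invSqSum σ (m + 2) := by
      rw [Matrix.adjugate_fin_succ_eq_det_submatrix, Fin.succAbove_last,
        spacingCov_submatrix_castSucc, ih (fun k h₁ h₂ => hσ k h₁ (by omega))]
      simp
    have key := congr_fun₂ (Matrix.smul_adjugate_of_mul_eq_smul_one
      (spacingCov_mul_greenMatrix (m + 1) hσ₀)) (Fin.last _) (Fin.last _)
    simp only [Matrix.smul_apply, hminor, greenMatrix, greenFun, Matrix.of_apply, Fin.val_last,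
      min_self, max_self, smul_eq_mul] at key
    rw [invSqSum_succ σ (m + 2)] at key ⊢
    rw [prod_Icc_succ_top (by omega)]
    field_simp at key ⊢
    linear_combination -key

lemma adjugate_spacingCov (m : ℕ) {σ : ℕ → ℝ} (hσ : ∀ k, 1 ≤ k → k ≤ m + 2 → 0 < σ k) :
    (spacingCov m σ).adjugate = (∏ ℓ ∈ Icc 1 (m + 2), σ ℓ ^ 2) • greenMatrix m σ := by
  have h := Matrix.smul_adjugate_of_mul_eq_smul_one
    (spacingCov_mul_greenMatrix m fun k h₁ h₂ => (hσ k h₁ h₂).ne')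
  rw [det_spacingCov m hσ, mul_comm, ← smul_smul] at h
  exact smul_right_injective _ (invSqSum_pos hσ (by omega)).ne' h

/-- Cofactor formula for the tridiagonal spacings covariance matrix `A` (size `(n-1)×(n-1)`,
here `n = m + 2`): for `j ≤ k`, `(-1)^(j+k) det(A^{j,k}) = (∏ σ_ℓ²)(∑_{ℓ≤j} σ_ℓ⁻²)(∑_{ℓ>k} σ_ℓ⁻²)`. -/
theorem cofactor_formula
    (m : ℕ) (σ : ℕ → ℝ) (hσ : ∀ k, 1 ≤ k → k ≤ m + 2 → 0 < σ k)
    (A : Matrix (Fin (m + 1)) (Fin (m + 1)) ℝ)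
    (hA : ∀ i j : Fin (m + 1), A i j =
      if i = j then σ ((i : ℕ) + 1) ^ 2 + σ ((i : ℕ) + 2) ^ 2
      else if (j : ℕ) = (i : ℕ) + 1 then -(σ ((i : ℕ) + 2)) ^ 2
      else if (i : ℕ) = (j : ℕ) + 1 then -(σ ((i : ℕ) + 1)) ^ 2
      else 0)
    (a b : Fin (m + 1)) (hab : (a : ℕ) ≤ (b : ℕ)) :
    (-1 : ℝ) ^ (((a : ℕ) + 1) + ((b : ℕ) + 1)) *
        Matrix.det (A.submatrix a.succAbove b.succAbove) =
      (∏ ℓ ∈ Finset.Icc 1 (m + 2), (σ ℓ) ^ 2) *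
        (∑ ℓ ∈ Finset.Icc 1 ((a : ℕ) + 1), ((σ ℓ) ^ 2)⁻¹) *
        (∑ ℓ ∈ Finset.Icc ((b : ℕ) + 2) (m + 2), ((σ ℓ) ^ 2)⁻¹) := by
  obtain rfl : A = spacingCov m σ := Matrix.ext hA
  have hcofactor := congr_fun₂ (adjugate_spacingCov m hσ) b a
  rw [Matrix.adjugate_fin_succ_eq_det_submatrix] at hcofactor
  have hsign : (-1 : ℝ) ^ (((a : ℕ) + 1) + ((b : ℕ) + 1)) = (-1) ^ ((a : ℕ) + b) := by ring
  rw [hsign, hcofactor, Matrix.smul_apply, greenMatrix, Matrix.of_apply, greenFun,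
    min_eq_right (by omega), max_eq_left (by omega), invSqSum_sub σ (by omega), smul_eq_mul,
    mul_assoc]
  rfl
end

section
/- Let $q \in [0,1]$. There exist functions $g, h: \mathbb{R} \setminus \{0\} \to \mathbb{R}$ and a nonempty open set of pairs $(a,b)$ such that $\frac{qa + (1-q)b}{qb + (1-q)a} = g(a)\,h(b)$ for all $(a,b)$ in that set with $qb + (1-q)a \neq 0$, if and only if $q \in \{0, 1/2, 1\}$. -/
/-- An open set of reals containing a point contains an open interval around it. -/
lemma open_contains_Ioo {u : Set ℝ} {x : ℝ} (hu : IsOpen u) (hx : x ∈ u) :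
    ∃ ε > 0, Set.Ioo (x - ε) (x + ε) ⊆ u := by
  rcases Metric.isOpen_iff.mp hu x hx with ⟨ε, hε, hb⟩
  exact ⟨ε, hε, by rw [← Real.ball_eq_Ioo]; exact hb⟩

/-- The rational function `(a,b) ↦ (qa+(1-q)b)/(qb+(1-q)a)` factors as `g(a)h(b)` on some
nonempty open set iff `q ∈ {0, 1/2, 1}`. -/
theorem factorization_iff
    (q : ℝ) (hq : q ∈ Set.Icc (0 : ℝ) 1) :
    (∃ s : Set (ℝ × ℝ), IsOpen s ∧ s.Nonempty ∧ ∃ g h : ℝ → ℝ,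
      ∀ p ∈ s, q * p.2 + (1 - q) * p.1 ≠ 0 →
        (q * p.1 + (1 - q) * p.2) / (q * p.2 + (1 - q) * p.1) = g p.1 * h p.2)
    ↔ q = 0 ∨ q = 1 / 2 ∨ q = 1 := by
  constructor
  · rintro ⟨s, hs_open, ⟨p0, hp0⟩, g, h, hfac⟩
    by_contra hcon
    push_neg at hcon
    obtain ⟨hq0, hqh, hq1⟩ := hcon
    -- find an open rectangle inside s
    rcases isOpen_prod_iff.mp hs_open p0.1 p0.2 (by simpa using hp0) with
      ⟨u, v, hu, hv, hau, hbv, huv⟩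
    rcases open_contains_Ioo hu hau with ⟨ε₁, hε₁, hI⟩
    rcases open_contains_Ioo hv hbv with ⟨ε₂, hε₂, hJ⟩
    set I := Set.Ioo (p0.1 - ε₁) (p0.1 + ε₁) with hIdef
    set J := Set.Ioo (p0.2 - ε₂) (p0.2 + ε₂) with hJdef
    have hIinf : I.Infinite := Set.Ioo_infinite (by linarith)
    have hJinf : J.Infinite := Set.Ioo_infinite (by linarith)
    -- choose a ≠ A in I
    obtain ⟨a, haI, A, hAI, haA⟩ := hIinf.nontrivial
    -- choose b in J avoiding 3 bad values
    have hbad1 : ({-((1-q)*a)/q, -((1-q)*A)/q, 0} : Set ℝ).Finite := by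
      exact (Set.finite_singleton _).insert _ |>.insert _
    obtain ⟨b, hbJ'⟩ := (hJinf.diff hbad1).nonempty
    obtain ⟨hbJ, hbnot⟩ := hbJ'
    simp only [Set.mem_insert_iff, Set.mem_singleton_iff, not_or] at hbnot
    obtain ⟨hb1, hb2, hb0⟩ := hbnot
    -- choose B in J avoiding 4 bad values
    have hbad2 : ({-((1-q)*a)/q, -((1-q)*A)/q, b, a*A/b} : Set ℝ).Finite := by
      exact (Set.finite_singleton _).insert _ |>.insert _ |>.insert _
    obtain ⟨B, hBJ'⟩ := (hJinf.diff hbad2).nonempty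
    obtain ⟨hBJ, hBnot⟩ := hBJ'
    simp only [Set.mem_insert_iff, Set.mem_singleton_iff, not_or] at hBnot
    obtain ⟨hB1, hB2, hBb, hBab⟩ := hBnot
    -- denominators nonzero
    have hden : ∀ x : ℝ, ∀ y : ℝ, y ≠ -((1-q)*x)/q → q * y + (1 - q) * x ≠ 0 := by
      intro x y hy hzero
      apply hy
      field_simp
      linarith
    have hD1 : q * b + (1 - q) * a ≠ 0 := hden a b hb1
    have hD2 : q * B + (1 - q) * A ≠ 0 := hden A B hB2
    have hD3 : q * B + (1 - q) * a ≠ 0 := hden a B hB1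
    have hD4 : q * b + (1 - q) * A ≠ 0 := hden A b hb2
    -- membership in s
    have hmem : ∀ x ∈ I, ∀ y ∈ J, ((x, y) : ℝ × ℝ) ∈ s := fun x hx y hy =>
      huv ⟨hI hx, hJ hy⟩
    -- the four factorization equations
    have e1 := hfac (a, b) (hmem a haI b hbJ) hD1
    have e2 := hfac (A, B) (hmem A hAI B hBJ) hD2
    have e3 := hfac (a, B) (hmem a haI B hBJ) hD3
    have e4 := hfac (A, b) (hmem A hAI b hbJ) hD4
    simp only at e1 e2 e3 e4
    -- cross-ratio identity
    have hcross : (q * a + (1 - q) * b) / (q * b + (1 - q) * a) *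
        ((q * A + (1 - q) * B) / (q * B + (1 - q) * A)) =
        (q * a + (1 - q) * B) / (q * B + (1 - q) * a) *
        ((q * A + (1 - q) * b) / (q * b + (1 - q) * A)) := by
      rw [e1, e2, e3, e4]; ring
    have hpoly : (q * a + (1 - q) * b) * (q * A + (1 - q) * B) *
        ((q * B + (1 - q) * a) * (q * b + (1 - q) * A)) =
        (q * a + (1 - q) * B) * (q * A + (1 - q) * b) *
        ((q * b + (1 - q) * a) * (q * B + (1 - q) * A)) := by
      rw [div_mul_div_comm, div_mul_div_comm,
        div_eq_div_iff (mul_ne_zero hD1 hD2) (mul_ne_zero hD3 hD4)] at hcross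
      linarith [hcross]
    -- key identity: E = q(1-q)(2q-1)(a-A)(b-B)(aA - bB)
    have hkey : q * (1 - q) * (2 * q - 1) * (a - A) * (b - B) * (a * A - b * B) = 0 := by
      linear_combination hpoly
    -- all factors nonzero
    have h1q : (1 : ℝ) - q ≠ 0 := fun hh => hq1 (by linarith)
    have h2q : 2 * q - 1 ≠ 0 := fun hh => hqh (by linarith)
    have haA' : a - A ≠ 0 := sub_ne_zero.mpr haA
    have hbB' : b - B ≠ 0 := sub_ne_zero.mpr (Ne.symm hBb)
    have hab' : a * A - b * B ≠ 0 := by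
      intro hh
      apply hBab
      field_simp
      linarith
    have := mul_ne_zero (mul_ne_zero (mul_ne_zero (mul_ne_zero
      (mul_ne_zero hq0 h1q) h2q) haA') hbB') hab'
    exact this hkey
  · rintro (rfl | rfl | rfl)
    · refine ⟨Set.univ, isOpen_univ, Set.univ_nonempty, fun a => a⁻¹, fun b => b, ?_⟩
      intro p _ hne
      simp only [zero_mul, zero_add, sub_zero, one_mul] at hne ⊢
      field_simp
    · refine ⟨Set.univ, isOpen_univ, Set.univ_nonempty, fun _ => 1, fun _ => 1, ?_⟩
      intro p _ hne
      have heq : (1:ℝ)/2 * p.1 + (1 - 1/2) * p.2 = 1/2 * p.2 + (1 - 1/2) * p.1 := by ring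
      simp only [heq, div_self hne, mul_one]
    · refine ⟨Set.univ, isOpen_univ, Set.univ_nonempty, fun a => a, fun b => b⁻¹, ?_⟩
      intro p _ hne
      simp only [one_mul, sub_self, zero_mul, add_zero] at hne ⊢
      field_simp
end
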